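/- arXiv:1803.10055 — 2 statements merged into one kernel-verified Lean document; each statement's English description precedes it below -/
import Mathlib

section
/- Let α ∈ (0,1), m ≥ 1, c > 0, and suppose r: [0,∞) → ℝ satisfies 0 < r(x) ≤ 1 and |(1+x)^{-α} - r(x)| ≤ c x^{2m+1} for all x ∈ [0,1]. Let δ > 0, λ ∈ [δ·2, ∞), N ≥ 1 a positive integer, k_N = 1/N, t_n = n k_N, and θ_n = k_N(λ-δ)/(δ + t_{n-1}(λ-δ)). Then for all 1 < p ≤ q ≤ N, ∏_{n=p}^{q} r(θ_n) ≤ C ∏_{n=p}^{q} (1+θ_n)^{-α}, where C = ∏_{j=1}^{∞} (1 + 2^α c j^{-2m-1}) < ∞. -/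
open Real Finset

/-!
For `n ≥ 2` the mesh ratio satisfies `0 ≤ θ n ≤ 1 / (n - 1) ≤ 1`, so the hypothesis on `r` bounds
`|(1 + θ n)^(-α) - r (θ n)|` by `c (n - 1)^(-(2m+1))`. As `(1 + x)^α ≤ 2^α` on `[0, 1]`, this
additive error is a relative one: `r (θ n) ≤ (1 + 2^α c (n - 1)^(-(2m+1))) (1 + θ n)^(-α)`.
The product over `p ≤ n ≤ q` of these factors, all at least `1` and indexed injectively by
`n - 1`, is dominated by the infinite product, which converges since `∑ j^(-(2m+1)) < ∞`.
-/

lemma Real.prod_comp_le_tprod_of_one_le {ι κ : Type*} {f : ι → ℝ} (hf : ∀ i, 1 ≤ f i)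
    (hfm : Multipliable f) {s : Finset κ} {g : κ → ι} (hg : Set.InjOn g s) :
    ∏ k ∈ s, f (g k) ≤ ∏' i, f i := by
  classical
  rw [← prod_image hg]
  exact ge_of_tendsto hfm.hasProd <| Filter.eventually_atTop.2 ⟨_, fun _ hst =>
    prod_le_prod_of_subset_of_one_le hst (fun i _ => zero_le_one.trans (hf i)) fun i _ _ => hf i⟩

lemma summable_nat_add_one_rpow_neg {s : ℝ} (hs : 1 < s) :
    Summable fun j : ℕ => ((j : ℝ) + 1) ^ (-s) := by
  simpa using (summable_nat_add_iff 1).2 (Real.summable_nat_rpow.2 (by linarith : -s < -1))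

lemma one_le_two_rpow_mul_one_add_rpow_neg {α x : ℝ} (hα : 0 ≤ α) (hx0 : 0 ≤ x) (hx1 : x ≤ 1) :
    1 ≤ 2 ^ α * (1 + x) ^ (-α) := by
  have hpos : 0 < (1 + x) ^ α := rpow_pos_of_pos (by linarith) α
  rw [rpow_neg (by linarith), ← div_eq_mul_inv, one_le_div hpos]
  exact rpow_le_rpow (by linarith) (by linarith) hα

lemma le_one_add_two_rpow_mul_mul_of_abs_sub_le {α x y ε : ℝ} (hα : 0 ≤ α) (hx0 : 0 ≤ x)
    (hx1 : x ≤ 1) (hε : 0 ≤ ε) (h : |(1 + x) ^ (-α) - y| ≤ ε) :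
    y ≤ (1 + 2 ^ α * ε) * (1 + x) ^ (-α) := by
  have hy : y ≤ (1 + x) ^ (-α) + ε := by linarith [(abs_le.1 h).1]
  have hrel : ε ≤ 2 ^ α * ε * (1 + x) ^ (-α) := by
    nlinarith [one_le_two_rpow_mul_one_add_rpow_neg hα hx0 hx1]
  linarith

lemma le_one_add_mul_rpow_neg_of_le_inv {α c x u : ℝ} {k : ℕ} {r : ℝ → ℝ} (hα : 0 ≤ α)
    (hc : 0 ≤ c) (hr : ∀ x ∈ Set.Icc (0 : ℝ) 1, |(1 + x) ^ (-α) - r x| ≤ c * x ^ k)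
    (hu : 1 ≤ u) (hx0 : 0 ≤ x) (hxu : x ≤ 1 / u) :
    r x ≤ (1 + 2 ^ α * c * u ^ (-(k : ℝ))) * (1 + x) ^ (-α) := by
  have hx1 : x ≤ 1 := hxu.trans (div_le_one_of_le₀ hu (by linarith))
  have hpow : x ^ k ≤ u ^ (-(k : ℝ)) := by
    rw [rpow_neg (by linarith), rpow_natCast, ← inv_pow, ← one_div]
    exact pow_le_pow_left₀ hx0 hxu k
  rw [mul_assoc]
  refine le_one_add_two_rpow_mul_mul_of_abs_sub_le hα hx0 hx1 (by positivity) ?_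
  exact (hr x ⟨hx0, hx1⟩).trans (mul_le_mul_of_nonneg_left hpow hc)

lemma div_add_div_mul_mem_Icc {N L δ u : ℝ} (hN : 0 ≤ N) (hL : 0 ≤ L) (hδ : 0 < δ)
    (hu : 0 < u) : 1 / N * L / (δ + u / N * L) ∈ Set.Icc 0 (1 / u) := by
  have hden : 0 < δ + u / N * L := by positivity
  refine ⟨by positivity, ?_⟩
  rw [div_le_div_iff₀ hden hu]
  have : 1 / N * L * u = u / N * L := by ring
  linarith

theorem stmt_9_general (α : ℝ) (hα : α ∈ Set.Ioo (0:ℝ) 1) (m : ℕ) (hm : 1 ≤ m)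
    (c : ℝ) (hc : 0 < c) (r : ℝ → ℝ)
    (hr1 : ∀ x : ℝ, 0 ≤ x → 0 < r x ∧ r x ≤ 1)
    (hr2 : ∀ x ∈ Set.Icc (0:ℝ) 1, |(1 + x) ^ (-α) - r x| ≤ c * x ^ (2 * m + 1))
    (δ lam : ℝ) (hδ : 0 < δ) (hlam : 2 * δ ≤ lam)
    (N : ℕ)
    (θ : ℕ → ℝ)
    (hθ : ∀ n : ℕ, θ n = (1 / N) * (lam - δ) / (δ + (((n : ℝ) - 1) / N) * (lam - δ))) :
    Multipliable (fun j : ℕ => (1 + 2 ^ α * c * ((j : ℝ) + 1) ^ (-(2 * (m : ℝ) + 1)))) ∧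
    ∀ p q : ℕ, 1 < p → p ≤ q → q ≤ N →
      ∏ n ∈ Finset.Icc p q, r (θ n)
        ≤ (∏' j : ℕ, (1 + 2 ^ α * c * ((j : ℝ) + 1) ^ (-(2 * (m : ℝ) + 1)))) *
          ∏ n ∈ Finset.Icc p q, (1 + θ n) ^ (-α) := by
  set f : ℕ → ℝ := fun j => 1 + 2 ^ α * c * ((j : ℝ) + 1) ^ (-(2 * (m : ℝ) + 1))
  have hf1 (j : ℕ) : 1 ≤ f j := le_add_of_nonneg_right (by have := hα.1; positivity)
  have hfm : Multipliable f := Real.multipliable_one_add_of_summable <|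
    (summable_nat_add_one_rpow_neg (by have : (1 : ℝ) ≤ m := mod_cast hm; linarith)).mul_left _
  refine ⟨hfm, fun p q hp _ _ => ?_⟩
  have hθ_mem (n : ℕ) (hn : n ∈ Icc p q) : θ n ∈ Set.Icc 0 (1 / (((n - 2 : ℕ) : ℝ) + 1)) := by
    have hn : 2 ≤ n := hp.trans_le (mem_Icc.1 hn).1
    have hu : ((n - 2 : ℕ) : ℝ) + 1 = (n : ℝ) - 1 := by push_cast [Nat.cast_sub hn]; ring
    have hu0 : (0 : ℝ) < (n : ℝ) - 1 := by rw [← hu]; positivity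
    rw [hu, hθ n]
    exact div_add_div_mul_mem_Icc (Nat.cast_nonneg N) (by linarith) hδ hu0
  have hterm (n : ℕ) (hn : n ∈ Icc p q) : r (θ n) ≤ f (n - 2) * (1 + θ n) ^ (-α) := by
    have := le_one_add_mul_rpow_neg_of_le_inv hα.1.le hc.le hr2
      (by simp) (hθ_mem n hn).1 (hθ_mem n hn).2
    simpa [f] using this
  calc ∏ n ∈ Icc p q, r (θ n)
      ≤ ∏ n ∈ Icc p q, f (n - 2) * (1 + θ n) ^ (-α) :=
        prod_le_prod (fun n hn => (hr1 _ (hθ_mem n hn).1).1.le) hterm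
    _ = (∏ n ∈ Icc p q, f (n - 2)) * ∏ n ∈ Icc p q, (1 + θ n) ^ (-α) := prod_mul_distrib
    _ ≤ (∏' j, f j) * ∏ n ∈ Icc p q, (1 + θ n) ^ (-α) := by
        gcongr
        · exact prod_nonneg fun n hn => (rpow_pos_of_pos (by linarith [(hθ_mem n hn).1]) _).le
        · refine Real.prod_comp_le_tprod_of_one_le hf1 hfm fun a ha b hb hab => ?_
          simp only [coe_Icc, Set.mem_Icc] at ha hb hab
          omega

theorem stmt_9 (α : ℝ) (hα : α ∈ Set.Ioo (0:ℝ) 1) (m : ℕ) (hm : 1 ≤ m)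
    (c : ℝ) (hc : 0 < c) (r : ℝ → ℝ)
    (hr1 : ∀ x : ℝ, 0 ≤ x → 0 < r x ∧ r x ≤ 1)
    (hr2 : ∀ x ∈ Set.Icc (0:ℝ) 1, |(1 + x) ^ (-α) - r x| ≤ c * x ^ (2 * m + 1))
    (δ lam : ℝ) (hδ : 0 < δ) (hlam : 2 * δ ≤ lam)
    (N : ℕ) (hN : 1 ≤ N)
    (θ : ℕ → ℝ)
    (hθ : ∀ n : ℕ, θ n = (1 / N) * (lam - δ) / (δ + (((n : ℝ) - 1) / N) * (lam - δ))) :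
    Multipliable (fun j : ℕ => (1 + 2 ^ α * c * ((j : ℝ) + 1) ^ (-(2 * (m : ℝ) + 1)))) ∧
    ∀ p q : ℕ, 1 < p → p ≤ q → q ≤ N →
      ∏ n ∈ Finset.Icc p q, r (θ n)
        ≤ (∏' j : ℕ, (1 + 2 ^ α * c * ((j : ℝ) + 1) ^ (-(2 * (m : ℝ) + 1)))) *
          ∏ n ∈ Finset.Icc p q, (1 + θ n) ^ (-α) :=
  stmt_9_general α hα m hm c hc r hr1 hr2 δ lam hδ hlam N θ hθ
end

section
/- Let f: [a,b] → ℝ be continuous and positive, with [a,b] ⊂ (0,∞), and suppose g(t) = t^{2m}(λ-δ)^{2m}/(δ + t(λ-δ))^{2m+α+1} with δ > 0, λ > δ, α ∈ (0,1), m ≥ 1. Then for a mesh interval [t_{j-1}, t_j] with t_{j-1} > 0 and t_j ≤ (1 + 1/N) t_{j-1}: g(t_{j-1})(t_j - t_{j-1}) ≤ ((N+1)/N)^{α+1} ∫_{t_{j-1}}^{t_j} g(t) dt. -/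
open Real

private lemma aux_key (α δ L : ℝ) (hα0 : 0 < α) (hδ : 0 < δ) (hL : 0 < L) (m : ℕ)
    (a t : ℝ) (ha : 0 < a) (hat : a ≤ t) :
    (a / t) ^ (α + 1) * (a ^ (2 * m) * L ^ (2 * m) / (δ + a * L) ^ (2 * (m:ℝ) + α + 1))
      ≤ t ^ (2 * m) * L ^ (2 * m) / (δ + t * L) ^ (2 * (m:ℝ) + α + 1) := by
  have ht : 0 < t := lt_of_lt_of_le ha hat
  have hP : 0 < δ + a * L := by positivity
  have hQ : 0 < δ + t * L := by positivity
  have hPs : 0 < (δ + a * L) ^ (2 * (m:ℝ) + α + 1) := Real.rpow_pos_of_pos hP _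
  have hQs : 0 < (δ + t * L) ^ (2 * (m:ℝ) + α + 1) := Real.rpow_pos_of_pos hQ _
  rw [mul_div_assoc', div_le_div_iff₀ hPs hQs]
  have hQle : δ + t * L ≤ (t / a) * (δ + a * L) := by
    rw [div_mul_eq_mul_div, le_div_iff₀ ha]
    nlinarith
  have h1 : (δ + t * L) ^ (2 * (m:ℝ) + α + 1) ≤ ((t / a) * (δ + a * L)) ^ (2 * (m:ℝ) + α + 1) :=
    Real.rpow_le_rpow hQ.le hQle (by positivity)
  have h4 : (t / a) ^ (2 * (m:ℝ)) = (t / a) ^ (2 * m) := by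
    rw [show (2 * (m:ℝ)) = ((2 * m : ℕ) : ℝ) by push_cast; ring, Real.rpow_natCast]
  have h2 : ((t / a) * (δ + a * L)) ^ (2 * (m:ℝ) + α + 1)
      = (t / a) ^ (2 * m) * (t / a) ^ (α + 1) * (δ + a * L) ^ (2 * (m:ℝ) + α + 1) := by
    rw [Real.mul_rpow (by positivity) hP.le, ← h4, ← Real.rpow_add (by positivity)]
    ring_nf
  have h3 : (a / t) ^ (α + 1) * (t / a) ^ (α + 1) = 1 := by
    rw [← Real.mul_rpow (by positivity) (by positivity)]
    rw [show (a / t) * (t / a) = 1 by field_simp, Real.one_rpow]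
  have h5 : a ^ (2 * m) * (t / a) ^ (2 * m) = t ^ (2 * m) := by
    rw [div_pow]; field_simp
  calc (a / t) ^ (α + 1) * (a ^ (2 * m) * L ^ (2 * m)) * (δ + t * L) ^ (2 * (m:ℝ) + α + 1)
      ≤ (a / t) ^ (α + 1) * (a ^ (2 * m) * L ^ (2 * m)) *
        ((t / a) ^ (2 * m) * (t / a) ^ (α + 1) * (δ + a * L) ^ (2 * (m:ℝ) + α + 1)) := by
        apply mul_le_mul_of_nonneg_left _ (by positivity)
        rw [← h2]; exact h1
    _ = ((a / t) ^ (α + 1) * (t / a) ^ (α + 1)) * (a ^ (2 * m) * (t / a) ^ (2 * m)) *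
          L ^ (2 * m) * (δ + a * L) ^ (2 * (m:ℝ) + α + 1) := by ring
    _ = t ^ (2 * m) * L ^ (2 * m) * (δ + a * L) ^ (2 * (m:ℝ) + α + 1) := by
        rw [h3, h5]; ring

theorem stmt_17 (α δ lam : ℝ) (hα : α ∈ Set.Ioo (0:ℝ) 1) (hδ : 0 < δ)
    (hlam : δ < lam) (m N : ℕ) (hm : 1 ≤ m) (hN : 1 ≤ N)
    (a b : ℝ) (ha : 0 < a) (hab : a < b) (hb : b ≤ (1 + 1 / (N : ℝ)) * a) :
    (a ^ (2 * m) * (lam - δ) ^ (2 * m) / (δ + a * (lam - δ)) ^ (2 * m + α + 1)) * (b - a)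
      ≤ (((N : ℝ) + 1) / N) ^ (α + 1) *
        ∫ t in a..b, t ^ (2 * m) * (lam - δ) ^ (2 * m) / (δ + t * (lam - δ)) ^ (2 * m + α + 1) := by
  obtain ⟨hα0, hα1⟩ := hα
  have hN0 : (0:ℝ) < N := by exact_mod_cast Nat.pos_of_ne_zero (by omega)
  have hL0 : 0 < lam - δ := by linarith
  set L : ℝ := lam - δ with hLdef
  set g : ℝ → ℝ := fun t => t ^ (2 * m) * L ^ (2 * m) / (δ + t * L) ^ (2 * (m:ℝ) + α + 1)
    with hg
  have hb0 : 0 < b := lt_trans ha hab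
  -- continuity and integrability of g on [a, b]
  have hgcont : ContinuousOn g (Set.Icc a b) := by
    apply ContinuousOn.div
    · fun_prop
    · apply ContinuousOn.rpow_const (by fun_prop)
      intro t ht
      exact Or.inr (by positivity)
    · intro t ht
      have ht0 : 0 < t := lt_of_lt_of_le ha ht.1
      exact ne_of_gt (Real.rpow_pos_of_pos (by positivity) _)
  have hint : IntervalIntegrable g MeasureTheory.volume a b :=
    hgcont.intervalIntegrable_of_Icc hab.le
  -- the constant lower bound
  set c : ℝ := ((N:ℝ) / (N + 1)) ^ (α + 1) * g a with hc
  have hga : 0 < g a := by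
    rw [hg]
    have : 0 < δ + a * L := by positivity
    have := Real.rpow_pos_of_pos this (2 * (m:ℝ) + α + 1)
    positivity
  have hcle : ∀ t ∈ Set.Icc a b, c ≤ g t := by
    intro t ht
    have ht0 : 0 < t := lt_of_lt_of_le ha ht.1
    have hratio : (N:ℝ) / (N + 1) ≤ a / t := by
      rw [div_le_div_iff₀ (by positivity) ht0]
      have hNN : (N:ℝ) * (1 + 1/N) = N + 1 := by field_simp
      nlinarith [ht.2, hb, hNN, mul_le_mul_of_nonneg_left hb hN0.le]
    have h1 : ((N:ℝ) / (N + 1)) ^ (α + 1) ≤ (a / t) ^ (α + 1) :=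
      Real.rpow_le_rpow (by positivity) hratio (by positivity)
    have h2 : (a / t) ^ (α + 1) * g a ≤ g t :=
      aux_key α δ L hα0 hδ hL0 m a t ha ht.1
    calc c ≤ (a / t) ^ (α + 1) * g a := by
          exact mul_le_mul_of_nonneg_right h1 hga.le
      _ ≤ g t := h2
  -- integral lower bound
  have hmono : ∫ _ in a..b, c ≤ ∫ t in a..b, g t :=
    intervalIntegral.integral_mono_on hab.le intervalIntegrable_const hint hcle
  rw [intervalIntegral.integral_const, smul_eq_mul] at hmono
  -- combine
  have hK : (0:ℝ) < (((N:ℝ) + 1) / N) ^ (α + 1) := Real.rpow_pos_of_pos (by positivity) _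
  have hKc : (((N:ℝ) + 1) / N) ^ (α + 1) * ((N:ℝ) / (N + 1)) ^ (α + 1) = 1 := by
    rw [← Real.mul_rpow (by positivity) (by positivity),
      show ((N:ℝ) + 1) / N * ((N:ℝ) / (N + 1)) = 1 by field_simp, Real.one_rpow]
  have := mul_le_mul_of_nonneg_left hmono hK.le
  calc g a * (b - a)
      = (((N:ℝ) + 1) / N) ^ (α + 1) * ((b - a) * c) := by
        rw [hc]; linear_combination (-(g a * (b - a))) * hKc
    _ ≤ (((N:ℝ) + 1) / N) ^ (α + 1) * ∫ t in a..b, g t := this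
end
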